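/- arXiv:2107.06474 — 6 statements merged into one kernel-verified Lean document; each statement's English description precedes it below -/
import Mathlib

section
/- Let C be an algebraically closed field of characteristic zero, and let A be an m×m matrix and B an n×n matrix over C. The C-linear map f on the space of m×n matrices defined by f(X) = AX − XB has spectrum equal to the set of differences {a − b : a an eigenvalue of A, b an eigenvalue of B}. -/
/-!
An eigenvector `X` for `μ` satisfies `(A - μ) X = X B`. By Cayley–Hamilton such a nonzero
intertwiner is killed from the right by `χ_{A-μ}(B)`, which is therefore singular, and by the
spectral mapping theorem `χ_{A-μ}` vanishes at some `b ∈ σ(B)`; thus `μ = (b + μ) - b` with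
`b + μ ∈ σ(A)`. Conversely, for a right eigenvector `v` of `A` for `a` and a left eigenvector `w`
of `B` for `b`, the rank-one matrix `v wᵀ` is an eigenvector for `a - b`.
-/

open Polynomial

namespace Matrix

variable {ι κ K : Type*}

theorem vecMulVec_ne_zero_of_ne_zero [MulZeroClass K] [NoZeroDivisors K] {v : ι → K} {w : κ → K}
    (hv : v ≠ 0) (hw : w ≠ 0) : vecMulVec v w ≠ 0 := by
  obtain ⟨i, hi⟩ := Function.ne_iff.mp hv
  obtain ⟨j, hj⟩ := Function.ne_iff.mp hw
  exact fun h => mul_ne_zero hi hj congr($h i j)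

variable [Fintype ι] [Fintype κ] [DecidableEq ι] [DecidableEq κ]

theorem aeval_mul_eq_mul_aeval_of_mul_eq_mul [CommSemiring K] {A : Matrix ι ι K}
    {B : Matrix κ κ K} {X : Matrix ι κ K} (h : A * X = X * B) (p : K[X]) :
    aeval A p * X = X * aeval B p := by
  induction p using Polynomial.induction_on with
  | C a => simp [Algebra.algebraMap_eq_smul_one]
  | add p q hp hq => simp only [map_add, Matrix.add_mul, Matrix.mul_add, hp, hq]
  | monomial k a ih =>
    simp only [pow_succ, ← mul_assoc, map_mul, aeval_X] at ih ⊢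
    rw [Matrix.mul_assoc _ A X, h, ← Matrix.mul_assoc, ih, Matrix.mul_assoc]

variable [Field K]

theorem det_algebraMap_sub_eq_zero_of_mem_spectrum {A : Matrix ι ι K} {a : K}
    (ha : a ∈ spectrum K A) : (algebraMap K _ a - A).det = 0 := by
  rwa [spectrum.mem_iff, isUnit_iff_isUnit_det, isUnit_iff_ne_zero, not_not] at ha

theorem exists_mulVec_eq_smul_of_mem_spectrum {A : Matrix ι ι K} {a : K}
    (ha : a ∈ spectrum K A) : ∃ v ≠ 0, A *ᵥ v = a • v := by
  obtain ⟨v, hv0, hv⟩ :=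
    exists_mulVec_eq_zero_iff.mpr (det_algebraMap_sub_eq_zero_of_mem_spectrum ha)
  refine ⟨v, hv0, ?_⟩
  rw [sub_mulVec, sub_eq_zero, Algebra.algebraMap_eq_smul_one, smul_mulVec, one_mulVec] at hv
  exact hv.symm

theorem exists_vecMul_eq_smul_of_mem_spectrum {B : Matrix κ κ K} {b : K}
    (hb : b ∈ spectrum K B) : ∃ w ≠ 0, w ᵥ* B = b • w := by
  obtain ⟨w, hw0, hw⟩ :=
    exists_vecMul_eq_zero_iff.mpr (det_algebraMap_sub_eq_zero_of_mem_spectrum hb)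
  refine ⟨w, hw0, ?_⟩
  rw [vecMul_sub, sub_eq_zero, Algebra.algebraMap_eq_smul_one, vecMul_smul, vecMul_one] at hw
  exact hw.symm

theorem spectrum_inter_nonempty_of_mul_eq_mul [IsAlgClosed K] {A : Matrix ι ι K}
    {B : Matrix κ κ K} {X : Matrix ι κ K} (hX : X ≠ 0) (h : A * X = X * B) :
    (spectrum K A ∩ spectrum K B).Nonempty := by
  obtain ⟨i, -⟩ : ∃ i j, X i j ≠ 0 := by simpa [← Matrix.ext_iff] using hX
  have hdeg : 0 < A.charpoly.degree := by
    rw [charpoly_degree_eq_dim]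
    exact_mod_cast Fintype.card_pos_iff.mpr ⟨i⟩
  have hkill : X * aeval B A.charpoly = 0 := by
    rw [← aeval_mul_eq_mul_aeval_of_mul_eq_mul h, aeval_self_charpoly, Matrix.zero_mul]
  have hsing : 0 ∈ spectrum K (aeval B A.charpoly) := by
    refine (spectrum.zero_mem_iff K).mpr fun hu => hX ?_
    rw [← Matrix.mul_one X, ← mul_nonsing_inv _ ((isUnit_iff_isUnit_det _).mp hu),
      ← Matrix.mul_assoc, hkill, Matrix.zero_mul]
  rw [spectrum.map_polynomial_aeval_of_degree_pos B _ hdeg] at hsing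
  obtain ⟨s, hsB, hroot⟩ := hsing
  exact ⟨s, mem_spectrum_iff_isRoot_charpoly.mpr hroot, hsB⟩

end Matrix

open Matrix in
theorem stmt_0_general {C : Type*} [Field C] [IsAlgClosed C]
    (m n : ℕ) (A : Matrix (Fin m) (Fin m) C) (B : Matrix (Fin n) (Fin n) C)
    (f : Module.End C (Matrix (Fin m) (Fin n) C))
    (hf : ∀ X, f X = A * X - X * B) :
    spectrum C f = {d | ∃ a ∈ spectrum C A, ∃ b ∈ spectrum C B, d = a - b} := by
  ext μ
  rw [← Module.End.hasEigenvalue_iff_mem_spectrum]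
  constructor
  · intro hμ
    obtain ⟨X, hX⟩ := hμ.exists_hasEigenvector
    have hintertwine : (A - algebraMap C _ μ) * X = X * B := by
      rw [Matrix.sub_mul, Algebra.algebraMap_eq_smul_one, Matrix.smul_mul, Matrix.one_mul,
        ← hX.apply_eq_smul, hf]
      abel
    obtain ⟨s, hsA, hsB⟩ := spectrum_inter_nonempty_of_mul_eq_mul hX.2 hintertwine
    rw [← spectrum.sub_singleton_eq, Set.sub_singleton] at hsA
    obtain ⟨a, ha, rfl⟩ := hsA
    exact ⟨a, ha, a - μ, hsB, by ring⟩
  · rintro ⟨a, ha, b, hb, rfl⟩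
    obtain ⟨v, hv0, hv⟩ := exists_mulVec_eq_smul_of_mem_spectrum ha
    obtain ⟨w, hw0, hw⟩ := exists_vecMul_eq_smul_of_mem_spectrum hb
    refine Module.End.hasEigenvalue_of_hasEigenvector (x := vecMulVec v w) ⟨?_, ?_⟩
    · rw [Module.End.mem_eigenspace_iff, hf, mul_vecMulVec, vecMulVec_mul, hv, hw,
        smul_vecMulVec, vecMulVec_smul, sub_smul]
    · exact vecMulVec_ne_zero_of_ne_zero hv0 hw0

/-- The spectrum of the Sylvester operator `X ↦ AX - XB` on `m×n` matrices over an
algebraically closed field of characteristic zero is the set of differences of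
eigenvalues of `A` and `B`. -/
theorem stmt_0 {C : Type*} [Field C] [IsAlgClosed C] [CharZero C]
    (m n : ℕ) (A : Matrix (Fin m) (Fin m) C) (B : Matrix (Fin n) (Fin n) C)
    (f : Module.End C (Matrix (Fin m) (Fin n) C))
    (hf : ∀ X, f X = A * X - X * B) :
    spectrum C f = {d | ∃ a ∈ spectrum C A, ∃ b ∈ spectrum C B, d = a - b} :=
  stmt_0_general m n A B f hf
end

section
/- Let R be a complete local noetherian algebra over an algebraically closed field C of characteristic zero, with residue field C and maximal ideal r. Let A be an n×n matrix over R whose reduction modulo r has no two distinct eigenvalues differing by an integer. Then for every nonzero integer ν, the R-linear map X ↦ νX − (AX − XA) on M_n(R) is bijective. -/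
/-! Over the algebraically closed residue field, `νX = AX - XA` says `(A - ν)X = XA`. Since no two
eigenvalues of `A` differ by `ν`, the matrices `A - ν` and `A` have disjoint spectra, and
evaluating the characteristic polynomial of `A - ν` at both sides kills the left one and turns
the right one into a unit: `X = 0`. So the reduced operator is bijective; Nakayama's lemma lifts
surjectivity to the finite `R`-module `M_n(R)`, and a surjective endomorphism of a finite module
is injective. -/

open Polynomial

theorem SemiconjBy.aeval {R A : Type*} [CommSemiring R] [Semiring A] [Algebra R A] {a x y : A}
    (h : SemiconjBy a x y) (p : R[X]) : SemiconjBy a (aeval x p) (aeval y p) := by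
  induction p using Polynomial.induction_on' with
  | add p q hp hq => simpa only [map_add] using hp.add_right hq
  | monomial k r =>
    simpa only [aeval_monomial] using
      SemiconjBy.mul_right (Algebra.commute_algebraMap_left r a).symm (h.pow_right k)

namespace Matrix

variable {ι : Type*} [Fintype ι] [DecidableEq ι]

theorem map_surjective {m n α β : Type*} {f : α → β} (hf : Function.Surjective f) :
    Function.Surjective (fun M : Matrix m n α => M.map f) :=
  hf.comp_left.comp_left

theorem mem_smul_top_of_forall_mem {m n R : Type*} [Fintype m] [Fintype n] [DecidableEq m]
    [DecidableEq n] [CommRing R] (I : Ideal R) (M : Matrix m n R) (h : ∀ i j, M i j ∈ I) :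
    M ∈ I • (⊤ : Submodule R (Matrix m n R)) := by
  rw [matrix_eq_sum_single M]
  refine Submodule.sum_mem _ fun i _ => Submodule.sum_mem _ fun j _ => ?_
  have := Submodule.smul_mem_smul (h i j) (Submodule.mem_top (x := single i j (1 : R)))
  rwa [smul_single, smul_eq_mul, mul_one] at this

theorem eq_zero_of_mul_eq_mul_of_disjoint_spectrum {F : Type*} [Field F] [IsAlgClosed F]
    {B B' X : Matrix ι ι F} (h : B * X = X * B')
    (hd : Disjoint (spectrum F B) (spectrum F B')) : X = 0 := by
  nontriviality Matrix ι ι F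
  have hunit : IsUnit (aeval B' B.charpoly) := by
    rw [← spectrum.zero_notMem_iff F, spectrum.map_polynomial_aeval_of_nonempty _ _
      (spectrum.nonempty_of_isAlgClosed_of_finiteDimensional F B')]
    rintro ⟨k, hk, hk0⟩
    exact hd.ne_of_mem (mem_spectrum_iff_isRoot_charpoly.2 hk0) hk rfl
  have hsemi : X * aeval B' B.charpoly = aeval B B.charpoly * X := (show SemiconjBy X B' B from h.symm).aeval _
  rwa [aeval_self_charpoly, zero_mul, hunit.mul_left_eq_zero] at hsemi

def intSubAd {R : Type*} [CommRing R] (ν : ℤ) (A : Matrix ι ι R) :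
    Matrix ι ι R →ₗ[R] Matrix ι ι R :=
  (ν : R) • LinearMap.id - (LinearMap.mulLeft R A - LinearMap.mulRight R A)

theorem intSubAd_apply {R : Type*} [CommRing R] (ν : ℤ) (A X : Matrix ι ι R) :
    intSubAd ν A X = (ν : R) • X - (A * X - X * A) := rfl

theorem map_intSubAd {R S : Type*} [CommRing R] [CommRing S] (φ : R →+* S) (ν : ℤ)
    (A X : Matrix ι ι R) : (intSubAd ν A X).map φ = intSubAd ν (A.map φ) (X.map φ) := by
  simp only [intSubAd_apply, ← RingHom.mapMatrix_apply, map_sub, map_mul,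
    Int.cast_smul_eq_zsmul, map_zsmul]

theorem intSubAd_injective {F : Type*} [Field F] [IsAlgClosed F] [CharZero F]
    {B : Matrix ι ι F}
    (hsp : ∀ a ∈ spectrum F B, ∀ b ∈ spectrum F B, a ≠ b → ∀ k : ℤ, a - b ≠ (k : F))
    {ν : ℤ} (hν : ν ≠ 0) : Function.Injective (intSubAd ν B) := by
  rw [← LinearMap.ker_eq_bot, LinearMap.ker_eq_bot']
  intro X hX
  rw [intSubAd_apply, sub_eq_zero] at hX
  refine eq_zero_of_mul_eq_mul_of_disjoint_spectrum (B := B - algebraMap F _ ν) (B' := B) ?_ ?_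
  · rw [sub_mul, Algebra.algebraMap_eq_smul_one, smul_mul_assoc, one_mul, hX, sub_sub_cancel]
  · rw [← spectrum.sub_singleton_eq, Set.disjoint_left]
    rintro _ ⟨a, ha, _, rfl, rfl⟩ hb
    exact hsp a ha _ hb (by rw [ne_eq, eq_sub_iff_add_eq, add_eq_left]; exact_mod_cast hν) ν (by ring)

theorem intSubAd_map_surjective {R S : Type*} [CommRing R] [CommRing S] {φ : R →+* S}
    (hφ : Function.Surjective φ) {ν : ℤ} {A : Matrix ι ι R}
    (h : Function.Surjective (intSubAd ν A)) : Function.Surjective (intSubAd ν (A.map φ)) := by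
  intro Y
  obtain ⟨Z, rfl⟩ := map_surjective hφ Y
  obtain ⟨X, rfl⟩ := h Z
  exact ⟨X.map φ, (map_intSubAd φ ν A X).symm⟩

theorem intSubAd_surjective_of_map_surjective {R : Type*} [CommRing R] [IsLocalRing R]
    {ν : ℤ} {A : Matrix ι ι R}
    (h : Function.Surjective
      (intSubAd ν (A.map (Ideal.Quotient.mk (IsLocalRing.maximalIdeal R))))) :
    Function.Surjective (intSubAd ν A) := by
  rw [← LinearMap.range_eq_top, ← IsLocalRing.map_mkQ_eq_top, Submodule.map_mkQ_eq_top,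
    Submodule.eq_top_iff']
  intro Y
  obtain ⟨Z, hZ⟩ := h (Y.map (Ideal.Quotient.mk _))
  obtain ⟨X, rfl⟩ := map_surjective Ideal.Quotient.mk_surjective Z
  rw [← map_intSubAd] at hZ
  refine Submodule.mem_sup.2 ⟨Y - intSubAd ν A X, mem_smul_top_of_forall_mem _ _ fun i j => ?_,
    _, LinearMap.mem_range_self _ X, sub_add_cancel _ _⟩
  exact Ideal.Quotient.eq.1 (congrFun (congrFun hZ i) j).symm

end Matrix

theorem stmt_2_general {C R : Type*} [Field C] [IsAlgClosed C] [CharZero C]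
    [CommRing R] [Algebra C R] [IsLocalRing R]
    (hres : Function.Bijective (algebraMap C (R ⧸ IsLocalRing.maximalIdeal R)))
    (n : ℕ) (A : Matrix (Fin n) (Fin n) R) (Abar : Matrix (Fin n) (Fin n) C)
    (hAbar : A.map (Ideal.Quotient.mk (IsLocalRing.maximalIdeal R)) =
      Abar.map (algebraMap C (R ⧸ IsLocalRing.maximalIdeal R)))
    (hsp : ∀ a ∈ spectrum C Abar, ∀ b ∈ spectrum C Abar, a ≠ b → ∀ k : ℤ, a - b ≠ (k : C)) :
    ∀ ν : ℤ, ν ≠ 0 →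
      Function.Bijective
        (fun X : Matrix (Fin n) (Fin n) R => (ν : R) • X - (A * X - X * A)) := by
  intro ν hν
  have hsurj : Function.Surjective (Matrix.intSubAd ν A) := by
    refine Matrix.intSubAd_surjective_of_map_surjective ?_
    rw [hAbar]
    exact Matrix.intSubAd_map_surjective hres.2
      (LinearMap.injective_iff_surjective.mp (Matrix.intSubAd_injective hsp hν))
  exact ⟨OrzechProperty.injective_of_surjective_endomorphism _ hsurj, hsurj⟩

/-- Let `R` be a complete local noetherian `C`-algebra with residue field `C`. If the
reduction of `A` modulo the maximal ideal has no two distinct eigenvalues differing by an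
integer, then for every nonzero integer `ν` the `R`-linear map `X ↦ νX - (AX - XA)` on
`n×n` matrices over `R` is bijective. -/
theorem stmt_2 {C R : Type*} [Field C] [IsAlgClosed C] [CharZero C]
    [CommRing R] [Algebra C R] [IsNoetherianRing R] [IsLocalRing R]
    [IsAdicComplete (IsLocalRing.maximalIdeal R) R]
    (hres : Function.Bijective (algebraMap C (R ⧸ IsLocalRing.maximalIdeal R)))
    (n : ℕ) (A : Matrix (Fin n) (Fin n) R) (Abar : Matrix (Fin n) (Fin n) C)
    (hAbar : A.map (Ideal.Quotient.mk (IsLocalRing.maximalIdeal R)) =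
      Abar.map (algebraMap C (R ⧸ IsLocalRing.maximalIdeal R)))
    (hsp : ∀ a ∈ spectrum C Abar, ∀ b ∈ spectrum C Abar, a ≠ b → ∀ k : ℤ, a - b ≠ (k : C)) :
    ∀ ν : ℤ, ν ≠ 0 →
      Function.Bijective
        (fun X : Matrix (Fin n) (Fin n) R => (ν : R) • X - (A * X - X * A)) :=
  stmt_2_general hres n A Abar hAbar hsp
end

section
/- Let Λ be a commutative finite-dimensional algebra over an algebraically closed field C of characteristic zero, n ⊂ Λ a nilpotent ideal, V a finite Λ-module, and A : V → V a Λ-linear endomorphism. Let V̄ = V/nV and let Ā be the induced endomorphism of V̄. Then the image of the generalized eigenspace G(A, ρ) in V̄ equals the generalized eigenspace G(Ā, ρ), and the spectrum of Ā equals the spectrum of A. -/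
/-!
The generalized eigenspaces `G ρ` of `A` over `C` are `Λ`-submodules, independent and spanning
`V`. The quotient map `V → V̄` intertwines `A` and `Ā`, so it sends `G ρ` into `G(Ā, ρ)`; since
the images span `V̄` and the `G(Ā, ρ)` are independent, these inclusions are equalities.
For the spectrum, `nV = ⨆ σ, n • G σ` with `n • G σ ≤ G σ`, so independence gives
`G ρ ⊓ nV = n • G ρ`. Hence if `G ρ` dies in `V̄`, then `G ρ = n • G ρ = nᵏ • G ρ = 0`.
-/

theorem iSupIndep.inf_iSup_eq_of_le {α ι : Type*} [CompleteLattice α] [IsModularLattice α]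
    {f g : ι → α} (hg : iSupIndep g) (hfg : f ≤ g) (i : ι) :
    g i ⊓ ⨆ j, f j = f i := by
  rw [iSup_split_single f i, inf_comm, sup_inf_assoc_of_le _ (hfg i)]
  have : Disjoint (⨆ (j) (_ : j ≠ i), f j) (g i) :=
    (hg i).symm.mono_left (iSup₂_mono fun j _ ↦ hfg j)
  rw [this.eq_bot, sup_bot_eq]

theorem Submodule.eq_bot_of_le_smul_of_pow_eq_bot {R M : Type*} [CommRing R] [AddCommGroup M]
    [Module R M] {I : Ideal R} {k : ℕ} (hI : I ^ k = ⊥) {N : Submodule R M} (hN : N ≤ I • N) :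
    N = ⊥ := by
  simpa [hI] using le_pow_smul hN k

theorem Submodule.eq_bot_of_le_smul_top_of_iSupIndep {R M ι : Type*} [CommRing R]
    [AddCommGroup M] [Module R M] {I : Ideal R} {k : ℕ} (hI : I ^ k = ⊥)
    {N : ι → Submodule R M} (hind : iSupIndep N) (htop : ⨆ i, N i = ⊤) {i : ι}
    (hi : N i ≤ I • ⊤) : N i = ⊥ := by
  refine eq_bot_of_le_smul_of_pow_eq_bot hI (le_of_eq ?_)
  have hsmul : I • ⊤ = ⨆ j, I • N j := by rw [← htop, smul_iSup]
  calc N i = N i ⊓ ⨆ j, I • N j := by rw [← hsmul, inf_eq_left.mpr hi]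
    _ = I • N i := hind.inf_iSup_eq_of_le (fun j ↦ smul_le_right) i

namespace Module.End

theorem hasEigenvalue_iff_maxGenEigenspace_ne_bot {R M : Type*} [CommRing R] [AddCommGroup M]
    [Module R M] {f : End R M} {μ : R} :
    f.HasEigenvalue μ ↔ f.maxGenEigenspace μ ≠ ⊥ :=
  (hasUnifEigenvalue_iff_hasUnifEigenvalue_one WithTop.top_pos).symm

theorem map_maxGenEigenspace_le {R M N : Type*} [CommRing R] [AddCommGroup M] [Module R M]
    [AddCommGroup N] [Module R N] {f : End R M} {g : End R N} {π : M →ₗ[R] N}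
    (h : g ∘ₗ π = π ∘ₗ f) (μ : R) :
    (f.maxGenEigenspace μ).map π ≤ g.maxGenEigenspace μ := by
  rintro _ ⟨x, hx, rfl⟩
  obtain ⟨k, hk⟩ := (mem_maxGenEigenspace f μ x).mp hx
  have hμ : (g - μ • 1) ∘ₗ π = π ∘ₗ (f - μ • 1) := by
    rw [LinearMap.sub_comp, LinearMap.comp_sub, h]; ext; simp
  refine (mem_maxGenEigenspace g μ (π x)).mpr ⟨k, ?_⟩
  rw [← LinearMap.comp_apply, commute_pow_left_of_commute hμ, LinearMap.comp_apply, hk, map_zero]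

theorem map_maxGenEigenspace_eq_of_surjective {K V W : Type*} [Field K] [IsAlgClosed K]
    [AddCommGroup V] [Module K V] [FiniteDimensional K V] [AddCommGroup W] [Module K W]
    {f : End K V} {g : End K W} {π : V →ₗ[K] W} (hπ : Function.Surjective π)
    (h : g ∘ₗ π = π ∘ₗ f) (μ : K) :
    (f.maxGenEigenspace μ).map π = g.maxGenEigenspace μ := by
  have htop : ⨆ μ, (f.maxGenEigenspace μ).map π = ⊤ := by
    rw [← Submodule.map_iSup, iSup_maxGenEigenspace_eq_top, Submodule.map_top,
      LinearMap.range_eq_top.mpr hπ]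
  exact congr_fun ((independent_maxGenEigenspace g).le_iff_eq_of_iSup_eq_top htop |>.mp
    (map_maxGenEigenspace_le h)) μ

variable {K R M : Type*} [Field K] [CommRing R] [Algebra K R] [AddCommGroup M] [Module R M]
  [Module K M] [IsScalarTower K R M]

theorem restrictScalars_maxGenEigenspace_algebraMap (f : End R M) (μ : K) :
    (f.maxGenEigenspace (algebraMap K R μ)).restrictScalars K =
      maxGenEigenspace (f.restrictScalars K) μ := by
  have hsub : (f.restrictScalars K - μ • 1) = (f - algebraMap K R μ • 1).restrictScalars K := by
    ext; simp
  ext x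
  rw [Submodule.restrictScalars_mem, mem_maxGenEigenspace, mem_maxGenEigenspace, hsub]
  simp only [pow_apply]
  exact Iff.rfl

theorem iSupIndep_maxGenEigenspace_algebraMap (f : End R M) :
    iSupIndep fun μ : K ↦ f.maxGenEigenspace (algebraMap K R μ) := by
  intro μ
  rw [← Submodule.disjoint_restrictScalars_iff (S := K)]
  simp only [Submodule.restrictScalars_iSup, restrictScalars_maxGenEigenspace_algebraMap]
  exact independent_maxGenEigenspace _ μ

variable [IsAlgClosed K] [FiniteDimensional K M]

theorem iSup_maxGenEigenspace_algebraMap_eq_top (f : End R M) :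
    ⨆ μ : K, f.maxGenEigenspace (algebraMap K R μ) = ⊤ := by
  rw [← Submodule.restrictScalars_eq_top_iff K, Submodule.restrictScalars_iSup]
  simp only [restrictScalars_maxGenEigenspace_algebraMap]
  exact iSup_maxGenEigenspace_eq_top _

theorem map_mkQ_maxGenEigenspace_eq_bot_iff {I : Ideal R} {k : ℕ} (hI : I ^ k = ⊥)
    (f : End R M) (μ : K) :
    (maxGenEigenspace (f.restrictScalars K) μ).map
        (((I • ⊤ : Submodule R M).mkQ).restrictScalars K) = ⊥ ↔
      maxGenEigenspace (f.restrictScalars K) μ = ⊥ := by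
  refine ⟨fun h ↦ ?_, fun h ↦ by rw [h, Submodule.map_bot]⟩
  rw [← le_bot_iff, Submodule.map_le_iff_le_comap, Submodule.comap_bot,
    LinearMap.ker_restrictScalars, Submodule.ker_mkQ,
    ← restrictScalars_maxGenEigenspace_algebraMap, Submodule.restrictScalars_le] at h
  rw [← restrictScalars_maxGenEigenspace_algebraMap, Submodule.restrictScalars_eq_bot_iff]
  exact Submodule.eq_bot_of_le_smul_top_of_iSupIndep hI
    (iSupIndep_maxGenEigenspace_algebraMap f) (iSup_maxGenEigenspace_algebraMap_eq_top f) h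

end Module.End

theorem stmt_4_general {C Λ V : Type*} [Field C] [IsAlgClosed C]
    [CommRing Λ] [Algebra C Λ] [FiniteDimensional C Λ]
    [AddCommGroup V] [Module Λ V] [Module.Finite Λ V]
    [Module C V] [IsScalarTower C Λ V]
    (n : Ideal Λ) (hn : ∃ k : ℕ, n ^ k = ⊥)
    (A : V →ₗ[Λ] V)
    (Abar : (V ⧸ (n • ⊤ : Submodule Λ V)) →ₗ[Λ] (V ⧸ (n • ⊤ : Submodule Λ V)))
    (hAbar : ∀ v : V, Abar (Submodule.Quotient.mk v) = Submodule.Quotient.mk (A v)) :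
    (∀ ρ : C,
      Submodule.map (((n • ⊤ : Submodule Λ V).mkQ).restrictScalars C)
          (Module.End.maxGenEigenspace (A.restrictScalars C) ρ) =
        Module.End.maxGenEigenspace (Abar.restrictScalars C) ρ) ∧
    (∀ ρ : C, Module.End.HasEigenvalue (Abar.restrictScalars C) ρ ↔
      Module.End.HasEigenvalue (A.restrictScalars C) ρ) := by
  have : Module.Finite C V := .trans Λ V
  obtain ⟨k, hk⟩ := hn
  have hcomm : Abar.restrictScalars C ∘ₗ (n • ⊤ : Submodule Λ V).mkQ.restrictScalars C =
      (n • ⊤ : Submodule Λ V).mkQ.restrictScalars C ∘ₗ A.restrictScalars C :=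
    LinearMap.ext hAbar
  have hsurj : Function.Surjective ((n • ⊤ : Submodule Λ V).mkQ.restrictScalars C) :=
    Submodule.mkQ_surjective (n • ⊤ : Submodule Λ V)
  have hmap := Module.End.map_maxGenEigenspace_eq_of_surjective hsurj hcomm
  refine ⟨hmap, fun ρ ↦ ?_⟩
  rw [Module.End.hasEigenvalue_iff_maxGenEigenspace_ne_bot,
    Module.End.hasEigenvalue_iff_maxGenEigenspace_ne_bot, ← hmap, Ne, Ne,
    Module.End.map_mkQ_maxGenEigenspace_eq_bot_iff hk]

/-- For a `Λ`-linear endomorphism `A` of a finite `Λ`-module `V` and a nilpotent ideal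
`n ⊆ Λ`, the image in `V̄ = V/nV` of each generalized eigenspace of `A` is the
corresponding generalized eigenspace of the induced endomorphism `Ā`, and `Ā` has the
same spectrum as `A`. -/
theorem stmt_4 {C Λ V : Type*} [Field C] [IsAlgClosed C] [CharZero C]
    [CommRing Λ] [Algebra C Λ] [FiniteDimensional C Λ]
    [AddCommGroup V] [Module Λ V] [Module.Finite Λ V]
    [Module C V] [IsScalarTower C Λ V]
    (n : Ideal Λ) (hn : ∃ k : ℕ, n ^ k = ⊥)
    (A : V →ₗ[Λ] V)
    (Abar : (V ⧸ (n • ⊤ : Submodule Λ V)) →ₗ[Λ] (V ⧸ (n • ⊤ : Submodule Λ V)))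
    (hAbar : ∀ v : V, Abar (Submodule.Quotient.mk v) = Submodule.Quotient.mk (A v)) :
    (∀ ρ : C,
      Submodule.map (((n • ⊤ : Submodule Λ V).mkQ).restrictScalars C)
          (Module.End.maxGenEigenspace (A.restrictScalars C) ρ) =
        Module.End.maxGenEigenspace (Abar.restrictScalars C) ρ) ∧
    (∀ ρ : C, Module.End.HasEigenvalue (Abar.restrictScalars C) ρ ↔
      Module.End.HasEigenvalue (A.restrictScalars C) ρ) :=
  stmt_4_general n hn A Abar hAbar
end

section
/- Let C be an algebraically closed field of characteristic zero, and let (V, A) and (V', A') be finite-dimensional C-spaces with endomorphisms such that no element of {a' − a : a' an eigenvalue of A', a an eigenvalue of A} is a negative integer. Then every C[[x]]-linear map Φ : C[[x]] ⊗ V → C[[x]] ⊗ V' commuting with the Euler derivations D_A and D_{A'} is of the form id ⊗ φ for a unique C-linear φ : V → V' satisfying A'φ = φA. -/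
/-!
Write `Φ (1 ⊗ v) = ∑ xⁿ ⊗ φₙ v`. Comparing the coefficients of `xⁿ` in `D' ∘ Φ = Φ ∘ D` gives
`(A' + n) φₙ = φₙ A`. For `n > 0` the endomorphisms `A' + n` and `A` have no common eigenvalue,
since `a' - a ≠ -n`, so `φₙ = 0` by Sylvester's theorem. Hence `Φ = id ⊗ φ₀` by
`C[[x]]`-linearity, and `φ₀` intertwines `A` and `A'`.
-/

open TensorProduct Polynomial

section Intertwiner

variable {R V W : Type*} [CommRing R] [AddCommGroup V] [Module R V] [AddCommGroup W] [Module R W]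
  {A : Module.End R V} {B : Module.End R W} {ψ : V →ₗ[R] W}

lemma pow_comp_of_comp_eq (h : B ∘ₗ ψ = ψ ∘ₗ A) (n : ℕ) : (B ^ n) ∘ₗ ψ = ψ ∘ₗ A ^ n := by
  induction n with
  | zero => rfl
  | succ n ih =>
    rw [pow_succ, pow_succ, Module.End.mul_eq_comp, Module.End.mul_eq_comp, LinearMap.comp_assoc,
      h, ← LinearMap.comp_assoc, ih, LinearMap.comp_assoc]

lemma aeval_comp_of_comp_eq (h : B ∘ₗ ψ = ψ ∘ₗ A) (p : R[X]) :
    aeval B p ∘ₗ ψ = ψ ∘ₗ aeval A p := by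
  induction p using Polynomial.induction_on' with
  | add p q hp hq => rw [map_add, map_add, LinearMap.add_comp, LinearMap.comp_add, hp, hq]
  | monomial n a =>
    simp only [aeval_monomial, Algebra.algebraMap_eq_smul_one, smul_mul_assoc, one_mul,
      LinearMap.smul_comp, LinearMap.comp_smul, pow_comp_of_comp_eq h n]

lemma injective_aeval_prod_X_sub_C {s : Multiset R} (h : ∀ a ∈ s, ¬ B.HasEigenvalue a) :
    Function.Injective (aeval B (s.map fun a => X - C a).prod) := by
  induction s using Multiset.induction with
  | empty =>
    rw [Multiset.map_zero, Multiset.prod_zero, map_one, Module.End.coe_one]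
    exact Function.injective_id
  | cons a s ih =>
    have ha : Function.Injective ⇑(B - a • 1) := by
      have := h a (Multiset.mem_cons_self a s)
      rwa [Module.End.hasEigenvalue_iff, Module.End.eigenspace_def, not_ne_iff,
        LinearMap.ker_eq_bot] at this
    rw [Multiset.map_cons, Multiset.prod_cons, map_mul, Module.End.coe_mul]
    simpa [Algebra.algebraMap_eq_smul_one] using
      ha.comp (ih fun b hb => h b (Multiset.mem_cons_of_mem hb))

/-- Sylvester's theorem: `minpoly A (B) ∘ ψ = ψ ∘ minpoly A (A) = 0`, while `minpoly A (B)` is a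
product of the injective maps `B - a` over the eigenvalues `a` of `A`. -/
theorem eq_zero_of_comp_eq_comp_of_not_hasEigenvalue {K V W : Type*} [Field K] [IsAlgClosed K]
    [AddCommGroup V] [Module K V] [FiniteDimensional K V] [AddCommGroup W] [Module K W]
    {A : Module.End K V} {B : Module.End K W} {ψ : V →ₗ[K] W}
    (hAB : ∀ a, A.HasEigenvalue a → ¬ B.HasEigenvalue a) (h : B ∘ₗ ψ = ψ ∘ₗ A) : ψ = 0 := by
  have hsplit := (IsAlgClosed.splits (minpoly K A)).eq_prod_roots_of_monic
    (minpoly.monic (Algebra.IsIntegral.isIntegral A))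
  have hinj : Function.Injective (aeval B (minpoly K A)) := by
    rw [hsplit]
    exact injective_aeval_prod_X_sub_C fun a ha =>
      hAB a (Module.End.hasEigenvalue_iff_isRoot.mpr (isRoot_of_mem_roots ha))
  ext v
  apply hinj
  simpa using congr($(aeval_comp_of_comp_eq h (minpoly K A)) v)

end Intertwiner

section PowerSeriesTensor

variable {R M : Type*} [CommRing R] [AddCommGroup M] [Module R M]

noncomputable def tensorCoeff (n : ℕ) : PowerSeries R ⊗[R] M →ₗ[R] M :=
  TensorProduct.lid R M ∘ₗ (PowerSeries.coeff n).rTensor M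

@[simp]
lemma tensorCoeff_tmul (n : ℕ) (f : PowerSeries R) (m : M) :
    tensorCoeff n (f ⊗ₜ[R] m) = PowerSeries.coeff n f • m := rfl

lemma tensorCoeff_ext [Module.Free R M] {z z' : PowerSeries R ⊗[R] M}
    (h : ∀ n, tensorCoeff n z = tensorCoeff n z') : z = z' := by
  classical
  let b := Module.Free.chooseBasis R M
  let e := TensorProduct.equivFinsuppOfBasisRight (M := PowerSeries R) b
  -- `e z i` is the power series `fᵢ` in the expansion `z = ∑ fᵢ ⊗ bᵢ`.
  have key : ∀ n i, (PowerSeries.coeff n).comp (Finsupp.lapply i ∘ₗ e.toLinearMap) =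
      Finsupp.lapply i ∘ₗ b.repr.toLinearMap ∘ₗ tensorCoeff n := fun n i =>
    TensorProduct.ext' fun f m => by simp [e, mul_comm]
  refine e.injective (Finsupp.ext fun i => PowerSeries.ext fun n => ?_)
  have hz := congr($(key n i) z)
  have hz' := congr($(key n i) z')
  simp only [LinearMap.comp_apply, LinearEquiv.coe_coe, Finsupp.lapply_apply] at hz hz'
  rw [hz, hz', h n]

end PowerSeriesTensor

section EulerConnection

variable {R V W : Type*} [CommRing R] [AddCommGroup V] [Module R V] [AddCommGroup W] [Module R W]
  {θ : PowerSeries R →ₗ[R] PowerSeries R}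

lemma tensorCoeff_comp_euler
    (hθ : ∀ (f : PowerSeries R) (n : ℕ),
      PowerSeries.coeff n (θ f) = (n : R) * PowerSeries.coeff n f)
    {A : Module.End R V} {D : PowerSeries R ⊗[R] V →ₗ[R] PowerSeries R ⊗[R] V}
    (hD : ∀ (f : PowerSeries R) (v : V), D (f ⊗ₜ[R] v) = θ f ⊗ₜ[R] v + f ⊗ₜ[R] A v) (n : ℕ) :
    tensorCoeff n ∘ₗ D = (A + (n : R) • LinearMap.id) ∘ₗ tensorCoeff n :=
  TensorProduct.ext' fun f v => by
    simp only [LinearMap.comp_apply, hD, map_add, tensorCoeff_tmul, hθ, mul_smul, map_smul,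
      LinearMap.add_apply, LinearMap.smul_apply, LinearMap.id_apply]
    module

noncomputable def coeffComponent
    (Φ : PowerSeries R ⊗[R] V →ₗ[PowerSeries R] PowerSeries R ⊗[R] W) (n : ℕ) : V →ₗ[R] W :=
  tensorCoeff n ∘ₗ Φ.restrictScalars R ∘ₗ TensorProduct.mk R (PowerSeries R) V 1

lemma coeffComponent_apply
    (Φ : PowerSeries R ⊗[R] V →ₗ[PowerSeries R] PowerSeries R ⊗[R] W) (n : ℕ) (v : V) :
    coeffComponent Φ n v = tensorCoeff n (Φ (1 ⊗ₜ[R] v)) := rfl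

lemma comp_coeffComponent
    (hθ : ∀ (f : PowerSeries R) (n : ℕ),
      PowerSeries.coeff n (θ f) = (n : R) * PowerSeries.coeff n f)
    {A : Module.End R V} {D : PowerSeries R ⊗[R] V →ₗ[R] PowerSeries R ⊗[R] V}
    (hD : ∀ (f : PowerSeries R) (v : V), D (f ⊗ₜ[R] v) = θ f ⊗ₜ[R] v + f ⊗ₜ[R] A v)
    {A' : Module.End R W} {D' : PowerSeries R ⊗[R] W →ₗ[R] PowerSeries R ⊗[R] W}
    (hD' : ∀ (f : PowerSeries R) (w : W), D' (f ⊗ₜ[R] w) = θ f ⊗ₜ[R] w + f ⊗ₜ[R] A' w)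
    {Φ : PowerSeries R ⊗[R] V →ₗ[PowerSeries R] PowerSeries R ⊗[R] W}
    (hΦ : ∀ x, D' (Φ x) = Φ (D x)) (n : ℕ) :
    (A' + (n : R) • LinearMap.id) ∘ₗ coeffComponent Φ n = coeffComponent Φ n ∘ₗ A := by
  have hθ1 : θ 1 = 0 := PowerSeries.ext fun n => by
    rw [hθ, PowerSeries.coeff_one]
    split_ifs with hn <;> simp [hn]
  ext v
  have hDv : D (1 ⊗ₜ[R] v) = 1 ⊗ₜ[R] A v := by rw [hD, hθ1, zero_tmul, zero_add]
  calc (A' + (n : R) • LinearMap.id : Module.End R W) (tensorCoeff n (Φ (1 ⊗ₜ[R] v)))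
      = tensorCoeff n (D' (Φ (1 ⊗ₜ[R] v))) := congr($(tensorCoeff_comp_euler hθ hD' n) _).symm
    _ = tensorCoeff n (Φ (1 ⊗ₜ[R] A v)) := by rw [hΦ, hDv]

lemma coeffComponent_zero_unique {Φ : PowerSeries R ⊗[R] V →ₗ[PowerSeries R] PowerSeries R ⊗[R] W}
    {ψ : V →ₗ[R] W} (hψ : ∀ v, Φ (1 ⊗ₜ[R] v) = 1 ⊗ₜ[R] ψ v) : ψ = coeffComponent Φ 0 := by
  ext v
  simp [coeffComponent_apply, hψ]

lemma apply_tmul_eq_tmul_coeffComponent_zero [Module.Free R W]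
    {Φ : PowerSeries R ⊗[R] V →ₗ[PowerSeries R] PowerSeries R ⊗[R] W}
    (hΦ : ∀ n, 0 < n → coeffComponent Φ n = 0) (f : PowerSeries R) (v : V) :
    Φ (f ⊗ₜ[R] v) = f ⊗ₜ[R] coeffComponent Φ 0 v := by
  have hone : Φ (1 ⊗ₜ[R] v) = 1 ⊗ₜ[R] coeffComponent Φ 0 v := by
    refine tensorCoeff_ext fun n => ?_
    rcases Nat.eq_zero_or_pos n with rfl | hn
    · simp [coeffComponent_apply]
    · simp [← coeffComponent_apply, hΦ n hn, PowerSeries.coeff_one, hn.ne']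
  rw [← mul_one f, ← smul_eq_mul, ← smul_tmul', map_smul, hone, smul_tmul', smul_eq_mul]

end EulerConnection

theorem stmt_11_general {C V V' : Type*} [Field C] [IsAlgClosed C]
    [AddCommGroup V] [Module C V] [FiniteDimensional C V]
    [AddCommGroup V'] [Module C V']
    (A : V →ₗ[C] V) (A' : V' →ₗ[C] V')
    (hsp : ∀ a a' : C, Module.End.HasEigenvalue A a → Module.End.HasEigenvalue A' a' →
      ∀ k : ℕ, 0 < k → a' - a ≠ -(k : C))
    (θ : PowerSeries C →ₗ[C] PowerSeries C)
    (hθ : ∀ (f : PowerSeries C) (n : ℕ),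
      PowerSeries.coeff n (θ f) = (n : C) * PowerSeries.coeff n f)
    (D : (PowerSeries C) ⊗[C] V →ₗ[C] (PowerSeries C) ⊗[C] V)
    (hD : ∀ (f : PowerSeries C) (v : V), D (f ⊗ₜ[C] v) = (θ f) ⊗ₜ[C] v + f ⊗ₜ[C] (A v))
    (D' : (PowerSeries C) ⊗[C] V' →ₗ[C] (PowerSeries C) ⊗[C] V')
    (hD' : ∀ (f : PowerSeries C) (v : V'),
      D' (f ⊗ₜ[C] v) = (θ f) ⊗ₜ[C] v + f ⊗ₜ[C] (A' v))
    (Φ : (PowerSeries C) ⊗[C] V →ₗ[PowerSeries C] (PowerSeries C) ⊗[C] V')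
    (hΦ : ∀ x, D' (Φ x) = Φ (D x)) :
    ∃ φ : V →ₗ[C] V',
      A' ∘ₗ φ = φ ∘ₗ A ∧
      (∀ (f : PowerSeries C) (v : V), Φ (f ⊗ₜ[C] v) = f ⊗ₜ[C] (φ v)) ∧
      ∀ ψ : V →ₗ[C] V', (∀ (f : PowerSeries C) (v : V), Φ (f ⊗ₜ[C] v) = f ⊗ₜ[C] (ψ v)) →
        ψ = φ := by
  have hcomp := comp_coeffComponent hθ hD hD' hΦ
  have hvanish : ∀ n, 0 < n → coeffComponent Φ n = 0 := fun n hn =>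
    eq_zero_of_comp_eq_comp_of_not_hasEigenvalue
      (fun a ha ha' => hsp a (a - n) ha (Module.End.hasEigenvalue_add_iff.mp ha') n hn (by ring))
      (hcomp n)
  refine ⟨coeffComponent Φ 0, by simpa using hcomp 0,
    apply_tmul_eq_tmul_coeffComponent_zero hvanish,
    fun ψ hψ => coeffComponent_zero_unique fun v => hψ 1 v⟩

/-- If no element of `Sp(A') ⊖ Sp(A)` is a negative integer, then every horizontal
`C[[x]]`-linear map between the Euler connections `eul(V,A)` and `eul(V',A')` is of the
form `id ⊗ φ` for a unique `φ : V → V'`, and this `φ` satisfies `A'φ = φA`. -/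
theorem stmt_11 {C V V' : Type*} [Field C] [IsAlgClosed C] [CharZero C]
    [AddCommGroup V] [Module C V] [FiniteDimensional C V]
    [AddCommGroup V'] [Module C V'] [FiniteDimensional C V']
    (A : V →ₗ[C] V) (A' : V' →ₗ[C] V')
    (hsp : ∀ a a' : C, Module.End.HasEigenvalue A a → Module.End.HasEigenvalue A' a' →
      ∀ k : ℕ, 0 < k → a' - a ≠ -(k : C))
    (θ : PowerSeries C →ₗ[C] PowerSeries C)
    (hθ : ∀ (f : PowerSeries C) (n : ℕ),
      PowerSeries.coeff n (θ f) = (n : C) * PowerSeries.coeff n f)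
    (D : (PowerSeries C) ⊗[C] V →ₗ[C] (PowerSeries C) ⊗[C] V)
    (hD : ∀ (f : PowerSeries C) (v : V), D (f ⊗ₜ[C] v) = (θ f) ⊗ₜ[C] v + f ⊗ₜ[C] (A v))
    (D' : (PowerSeries C) ⊗[C] V' →ₗ[C] (PowerSeries C) ⊗[C] V')
    (hD' : ∀ (f : PowerSeries C) (v : V'),
      D' (f ⊗ₜ[C] v) = (θ f) ⊗ₜ[C] v + f ⊗ₜ[C] (A' v))
    (Φ : (PowerSeries C) ⊗[C] V →ₗ[PowerSeries C] (PowerSeries C) ⊗[C] V')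
    (hΦ : ∀ x, D' (Φ x) = Φ (D x)) :
    ∃ φ : V →ₗ[C] V',
      A' ∘ₗ φ = φ ∘ₗ A ∧
      (∀ (f : PowerSeries C) (v : V), Φ (f ⊗ₜ[C] v) = f ⊗ₜ[C] (φ v)) ∧
      ∀ ψ : V →ₗ[C] V', (∀ (f : PowerSeries C) (v : V), Φ (f ⊗ₜ[C] v) = f ⊗ₜ[C] (ψ v)) →
        ψ = φ :=
  stmt_11_general A A' hsp θ hθ D hD D' hD' Φ hΦ
end

section
/- Let A be a commutative ring, Ω an A-module, d : A → Ω a derivation, and M a finitely generated A-module equipped with a connection ∇ : M → M ⊗_A Ω (an additive map satisfying ∇(am) = a∇(m) + m ⊗ d(a)). Then every Fitting ideal Fitt_r(M) of M is d-invariant, i.e. d(Fitt_r(M)) ⊆ Fitt_r(M)·Ω. -/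
/-! Fix a presentation `π : Aⁿ → M`. Lifting `∇` along `π` produces a connection matrix `ω` such
that `∇ (π u)` is the image of the vector `∇̃ u := (d uₗ + ∑ⱼ uⱼ ωⱼₗ)ₗ ∈ Ωⁿ`; when `u` is a relation,
`∇̃ u` therefore comes from `ker π ⊗ Ω`, by right exactness of `- ⊗ Ω`. For a minor
`X = (sₖ (cᵢ))` of a relation matrix, substitute `d Xₖᵢ = (∇̃ sₖ)(cᵢ) - ∑ⱼ sₖⱼ ωⱼ,cᵢ` into Jacobi's
formula `d (det X) = ∑ adj(X)ᵢₖ d Xₖᵢ`. The first part becomes an `Ω`-combination of minors whose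
row `k` is replaced by another relation, the second an `Ω`-combination of minors whose column `cᵢ`
is replaced by another column `j`; all of them lie in `Fitt_r M`. -/

open TensorProduct

/-- For `n ≤ r` the truncated subtraction `n - r = 0` makes the only minor the empty determinant
`1`, in accordance with `Fitt_r M = A` for `r ≥ n`. -/
def fittingIdeal (A : Type*) [CommRing A] (M : Type*) [AddCommGroup M] [Module A M]
    (r : ℕ) : Ideal A :=
  ⨆ (n : ℕ) (π : (Fin n → A) →ₗ[A] M) (_ : Function.Surjective π),
    Ideal.span {x : A |
      ∃ (s : Fin (n - r) → (Fin n → A)) (c : Fin (n - r) → Fin n),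
        (∀ i, π (s i) = 0) ∧ x = Matrix.det (Matrix.of fun i j => s i (c j))}

namespace Derivation

variable {R A M : Type*} [CommSemiring R] [CommSemiring A] [Algebra R A] [AddCommMonoid M]
  [Module A M] [Module R M] (D : Derivation R A M)

theorem leibniz_prod {ι : Type*} [DecidableEq ι] (s : Finset ι) (f : ι → A) :
    D (∏ i ∈ s, f i) = ∑ i ∈ s, (∏ j ∈ s.erase i, f j) • D (f i) := by
  induction s using Finset.induction_on with
  | empty => simp
  | insert a s ha ih =>
    rw [Finset.prod_insert ha, leibniz, ih, Finset.sum_insert ha, Finset.erase_insert ha,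
      Finset.smul_sum, add_comm]
    congr 1
    refine Finset.sum_congr rfl fun i hi => ?_
    rw [smul_smul, ← Finset.prod_insert fun h => ha (Finset.mem_of_mem_erase h),
      Finset.erase_insert_of_ne (ne_of_mem_of_not_mem hi ha).symm]

end Derivation

namespace Matrix

variable {n A M : Type*} [Fintype n] [DecidableEq n] [CommRing A] [AddCommGroup M] [Module A M]

theorem det_updateCol_eq_sum_perm (X : Matrix n n A) (i : n) (v : n → A) :
    (X.updateCol i v).det =
      ∑ σ : Equiv.Perm n, Equiv.Perm.sign σ • (v (σ i) * ∏ j ∈ Finset.univ.erase i, X (σ j) j) := by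
  rw [det_apply]
  refine Finset.sum_congr rfl fun σ _ => ?_
  rw [← Finset.mul_prod_erase _ _ (Finset.mem_univ i), updateCol_self]
  congr 2
  exact Finset.prod_congr rfl fun j hj => updateCol_ne (Finset.ne_of_mem_erase hj)

theorem adjugate_apply_eq_det_updateCol (X : Matrix n n A) (i k : n) :
    X.adjugate i k = (X.updateCol i (Pi.single k 1)).det := by
  rw [← cramer_apply, cramer_eq_adjugate_mulVec, mulVec_single_one, col_apply]

theorem sum_adjugate_mul_eq_det_updateCol (X : Matrix n n A) (i : n) (v : n → A) :
    ∑ k, X.adjugate i k * v k = (X.updateCol i v).det := by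
  rw [← cramer_apply, cramer_eq_adjugate_mulVec, mulVec, dotProduct]

theorem sum_mul_adjugate_eq_det_updateRow (X : Matrix n n A) (k : n) (v : n → A) :
    ∑ i, v i * X.adjugate i k = (X.updateRow k v).det := by
  rw [← cramer_transpose_apply, cramer_eq_adjugate_mulVec, ← adjugate_transpose, mulVec,
    dotProduct]
  simp only [transpose_apply, mul_comm]

theorem sum_perm_sign_smul_prod_erase_smul (X : Matrix n n A) (i : n) (w : n → M) :
    ∑ σ : Equiv.Perm n, Equiv.Perm.sign σ • (∏ j ∈ Finset.univ.erase i, X (σ j) j) • w (σ i) =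
      ∑ k, X.adjugate i k • w k := by
  simp only [adjugate_apply_eq_det_updateCol, det_updateCol_eq_sum_perm, Finset.sum_smul]
  rw [Finset.sum_comm]
  refine Finset.sum_congr rfl fun σ _ => ?_
  simp [Pi.single_apply, ite_smul, Units.smul_def, mul_smul, Int.cast_smul_eq_zsmul]

end Matrix

namespace Derivation

variable {R A M : Type*} [CommSemiring R] [CommRing A] [Algebra R A] [AddCommGroup M]
  [Module A M] [Module R M] (D : Derivation R A M)

theorem map_det {n : Type*} [Fintype n] [DecidableEq n] (X : Matrix n n A) :
    D X.det = ∑ i, ∑ k, X.adjugate i k • D (X k i) := by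
  simp only [Matrix.det_apply, map_sum, Units.smul_def, map_zsmul, D.leibniz_prod,
    Finset.smul_sum]
  rw [Finset.sum_comm]
  refine Finset.sum_congr rfl fun i _ => ?_
  rw [← Matrix.sum_perm_sign_smul_prod_erase_smul X i (fun k => D (X k i))]
  simp only [Units.smul_def]

theorem map_mem_smul_top_of_mem_span {S : Set A}
    (hS : ∀ x ∈ S, D x ∈ Ideal.span S • (⊤ : Submodule A M)) {x : A} (hx : x ∈ Ideal.span S) :
    D x ∈ Ideal.span S • (⊤ : Submodule A M) := by
  induction hx using Submodule.span_induction with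
  | mem x hx => exact hS x hx
  | zero => simp
  | add x y _ _ hx hy => simpa only [map_add] using add_mem hx hy
  | smul a x hx ih =>
    rw [smul_eq_mul, D.leibniz]
    exact add_mem (Submodule.smul_mem _ a ih) (Submodule.smul_mem_smul hx trivial)

end Derivation

section Connection

variable {A Ω M ι : Type*} [CommRing A] [AddCommGroup Ω] [Module A Ω] [AddCommGroup M]
  [Module A M]

variable (A Ω ι) in
def piTensorEquiv [Fintype ι] [DecidableEq ι] : (ι → A) ⊗[A] Ω ≃ₗ[A] (ι → Ω) :=
  (TensorProduct.comm A (ι → A) Ω).trans (TensorProduct.piScalarRight A A Ω ι)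

variable (Ω) in
/-- The image of `ker π ⊗ Ω` in `Ωⁿ`. -/
def relationSpan (π : (ι → A) →ₗ[A] M) : Submodule A (ι → Ω) :=
  Submodule.span A {v | ∃ p ∈ LinearMap.ker π, ∃ w : Ω, v = fun k => p k • w}

variable [Fintype ι] [DecidableEq ι]

@[simp]
theorem piTensorEquiv_tmul (v : ι → A) (w : Ω) :
    piTensorEquiv A Ω ι (v ⊗ₜ w) = fun k => v k • w := by
  ext k
  simp [piTensorEquiv]

theorem piTensorEquiv_symm_single (j : ι) (w : Ω) :
    (piTensorEquiv A Ω ι).symm (Pi.single j w) = Pi.single j 1 ⊗ₜ w := by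
  simp [piTensorEquiv]

theorem exists_rTensor_lift_connection (d : A → Ω) (D : M →+ M ⊗[A] Ω)
    (hD : ∀ (a : A) (m : M), D (a • m) = a • D m + m ⊗ₜ[A] d a)
    (π : (ι → A) →ₗ[A] M) (hπ : Function.Surjective π) :
    ∃ ω : ι → ι → Ω, ∀ u : ι → A,
      D (π u) = π.rTensor Ω ((piTensorEquiv A Ω ι).symm fun k => d (u k) + ∑ j, u j • ω j k) := by
  choose y hy using fun j => LinearMap.rTensor_surjective Ω hπ (D (π (Pi.single j 1)))
  refine ⟨fun j => piTensorEquiv A Ω ι (y j), fun u => ?_⟩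
  have hu : (fun k => d (u k) + ∑ j, u j • piTensorEquiv A Ω ι (y j) k) =
      ∑ j, (Pi.single j (d (u j)) + u j • piTensorEquiv A Ω ι (y j)) := by
    ext k
    simp [Finset.sum_add_distrib, Pi.single_apply]
  conv_lhs => rw [← Finset.univ_sum_single u]
  simp only [hu, map_sum, map_add, map_smul, LinearEquiv.symm_apply_apply,
    piTensorEquiv_symm_single, LinearMap.rTensor_tmul, hy]
  refine Finset.sum_congr rfl fun j _ => ?_
  have hsingle : (Pi.single j (u j) : ι → A) = u j • Pi.single j 1 := by
    rw [← Pi.single_smul', smul_eq_mul, mul_one]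
  rw [hsingle, map_smul, hD, add_comm]

theorem piTensorEquiv_rTensor_mem_relationSpan (π : (ι → A) →ₗ[A] M)
    (y : LinearMap.ker π ⊗[A] Ω) :
    piTensorEquiv A Ω ι ((LinearMap.ker π).subtype.rTensor Ω y) ∈ relationSpan Ω π := by
  induction y using TensorProduct.induction_on with
  | zero => simp
  | tmul p w =>
    rw [LinearMap.rTensor_tmul, piTensorEquiv_tmul]
    exact Submodule.subset_span ⟨p, p.2, w, rfl⟩
  | add y z hy hz => simpa only [map_add] using add_mem hy hz

theorem exists_connection_matrix (d : A → Ω) (D : M →+ M ⊗[A] Ω)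
    (hD : ∀ (a : A) (m : M), D (a • m) = a • D m + m ⊗ₜ[A] d a)
    (π : (ι → A) →ₗ[A] M) (hπ : Function.Surjective π) :
    ∃ ω : ι → ι → Ω, ∀ u ∈ LinearMap.ker π,
      (fun k => d (u k) + ∑ j, u j • ω j k) ∈ relationSpan Ω π := by
  obtain ⟨ω, hω⟩ := exists_rTensor_lift_connection d D hD π hπ
  refine ⟨ω, fun u hu => ?_⟩
  have hker :
      π.rTensor Ω ((piTensorEquiv A Ω ι).symm fun k => d (u k) + ∑ j, u j • ω j k) = 0 := by
    rw [← hω, LinearMap.mem_ker.mp hu, map_zero]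
  obtain ⟨y, hy⟩ := (rTensor_exact Ω (LinearMap.exact_subtype_ker_map π) hπ _).mp hker
  rw [← (piTensorEquiv A Ω ι).apply_symm_apply (fun k => _), ← hy]
  exact piTensorEquiv_rTensor_mem_relationSpan π y

end Connection

section Minors

variable {A Ω M ι κ : Type*} [CommRing A] [AddCommGroup Ω] [Module A Ω] [AddCommGroup M]
  [Module A M] [Fintype κ] [DecidableEq κ] {π : (ι → A) →ₗ[A] M} {I : Ideal A}

theorem sum_adjugate_smul_mem_smul_top
    (hI : ∀ s : κ → ι → A, (∀ k, π (s k) = 0) → ∀ c : κ → ι,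
      (Matrix.of fun k i => s k (c i)).det ∈ I)
    {s : κ → ι → A} (hs : ∀ k, π (s k) = 0) (c : κ → ι) (k : κ) {v : ι → Ω}
    (hv : v ∈ relationSpan Ω π) :
    ∑ i, (Matrix.of fun k i => s k (c i)).adjugate i k • v (c i) ∈ I • (⊤ : Submodule A Ω) := by
  induction hv using Submodule.span_induction with
  | mem v hv =>
    obtain ⟨p, hp, w, rfl⟩ := hv
    have hrow : (Matrix.of fun k i => s k (c i)).updateRow k (fun i => p (c i)) =
        Matrix.of fun k' i => Function.update s k p k' (c i) := by
      ext k' i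
      by_cases h : k' = k
      · subst h; simp
      · simp [h]
    have hrel : ∀ k', π (Function.update s k p k') = 0 := by
      intro k'
      by_cases h : k' = k
      · subst h; simpa using hp
      · simpa [h] using hs k'
    simp only [smul_smul, ← Finset.sum_smul]
    simp_rw [mul_comm _ (p _)]
    rw [Matrix.sum_mul_adjugate_eq_det_updateRow, hrow]
    exact Submodule.smul_mem_smul (hI _ hrel c) trivial
  | zero => simp
  | add v v' _ _ hv hv' =>
    simpa only [Pi.add_apply, smul_add, Finset.sum_add_distrib] using add_mem hv hv'
  | smul a v _ hv =>
    simpa only [Pi.smul_apply, smul_comm _ a, ← Finset.smul_sum] using Submodule.smul_mem _ a hv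

theorem Derivation.map_det_minor_mem_smul_top [Fintype ι] [DecidableEq ι] {R : Type*}
    [CommSemiring R] [Algebra R A] [Module R Ω]
    (δ : Derivation R A Ω) (D : M →+ M ⊗[A] Ω)
    (hD : ∀ (a : A) (m : M), D (a • m) = a • D m + m ⊗ₜ[A] δ a) (hπ : Function.Surjective π)
    (hI : ∀ s : κ → ι → A, (∀ k, π (s k) = 0) → ∀ c : κ → ι,
      (Matrix.of fun k i => s k (c i)).det ∈ I)
    {s : κ → ι → A} (hs : ∀ k, π (s k) = 0) (c : κ → ι) :
    δ (Matrix.of fun k i => s k (c i)).det ∈ I • (⊤ : Submodule A Ω) := by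
  obtain ⟨ω, hω⟩ := exists_connection_matrix δ D hD π hπ
  set X := Matrix.of fun k i => s k (c i)
  have hδX : ∀ k i, δ (X k i) =
      (fun l => δ (s k l) + ∑ j, s k j • ω j l) (c i) - ∑ j, s k j • ω j (c i) :=
    fun _ _ => (add_sub_cancel_right _ _).symm
  rw [δ.map_det]
  simp only [hδX, smul_sub, Finset.sum_sub_distrib]
  refine sub_mem ?_ (sum_mem fun i _ => ?_)
  · rw [Finset.sum_comm]
    exact sum_mem fun k _ => sum_adjugate_smul_mem_smul_top hI hs c k (hω _ (hs k))
  · have hcol : ∀ j, X.updateCol i (fun k => s k j) =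
        Matrix.of fun k i' => s k (Function.update c i j i') := by
      intro j
      ext k i'
      by_cases h : i' = i
      · subst h; simp
      · simp [h, X]
    simp only [Finset.smul_sum, smul_smul]
    rw [Finset.sum_comm]
    simp only [← Finset.sum_smul, Matrix.sum_adjugate_mul_eq_det_updateCol, hcol]
    exact sum_mem fun j _ => Submodule.smul_mem_smul (hI s hs _) trivial

end Minors

theorem stmt_12_general {A Ω M : Type*} [CommRing A] [AddCommGroup Ω] [Module A Ω]
    [AddCommGroup M] [Module A M]
    (d : A → Ω)
    (hd_add : ∀ a b : A, d (a + b) = d a + d b)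
    (hd_mul : ∀ a b : A, d (a * b) = a • d b + b • d a)
    (D : M →+ M ⊗[A] Ω)
    (hD : ∀ (a : A) (m : M), D (a • m) = a • D m + m ⊗ₜ[A] d a)
    (r : ℕ) :
    ∀ a ∈ fittingIdeal A M r, d a ∈ fittingIdeal A M r • (⊤ : Submodule A Ω) := by
  let δ : Derivation ℤ A Ω := Derivation.mk' (AddMonoidHom.mk' d hd_add).toIntLinearMap hd_mul
  intro a ha
  simp only [fittingIdeal, Ideal.span, Submodule.iSup_span] at ha ⊢
  refine δ.map_mem_smul_top_of_mem_span ?_ ha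
  simp only [Set.mem_iUnion]
  rintro _ ⟨n, π, hπ, s, c, hs, rfl⟩
  refine δ.map_det_minor_mem_smul_top D hD hπ (fun s' hs' c' => Submodule.subset_span ?_) hs c
  simp only [Set.mem_iUnion]
  exact ⟨n, π, hπ, s', c', hs', rfl⟩

/-- If a finitely generated `A`-module `M` carries a connection relative to a derivation
`d : A → Ω`, then every Fitting ideal of `M` is `d`-invariant:
`d(Fitt_r M) ⊆ Fitt_r(M)·Ω`. -/
theorem stmt_12 {A Ω M : Type*} [CommRing A] [AddCommGroup Ω] [Module A Ω]
    [AddCommGroup M] [Module A M] [Module.Finite A M]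
    (d : A → Ω)
    (hd_add : ∀ a b : A, d (a + b) = d a + d b)
    (hd_mul : ∀ a b : A, d (a * b) = a • d b + b • d a)
    (D : M →+ M ⊗[A] Ω)
    (hD : ∀ (a : A) (m : M), D (a • m) = a • D m + m ⊗ₜ[A] d a)
    (r : ℕ) :
    ∀ a ∈ fittingIdeal A M r, d a ∈ fittingIdeal A M r • (⊤ : Submodule A Ω) :=
  stmt_12_general d hd_add hd_mul D hD r
end

section
/- Let C be an algebraically closed field of characteristic zero and let M be a finite C[x, x⁻¹]-module equipped with a C-linear map ∇ : M → M satisfying ∇(fm) = ϑ(f)m + f∇(m) for ϑ = x·d/dx. Then M is a free C[x, x⁻¹]-module. -/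
/-!
The torsion submodule `N` of `M` is stable under `∇`. Being finitely generated and killed by a
nonzero Laurent polynomial `p`, it is finite-dimensional over `C`, because `C[x, x⁻¹] ⧸ (p)` is a
localization, hence a quotient, of the Artinian ring `C[x] ⧸ (p)`. Multiplication by `x` is an
automorphism of `N` with `x⁻¹ ∇ x = ∇ + 1`, so comparing traces gives `dim N = 0` in
characteristic zero. Thus `M` is torsion-free, hence free over the principal ideal domain
`C[x, x⁻¹]`.
-/

open LaurentPolynomial Polynomial

theorem IsLocalization.isPrincipalIdealRing {R : Type*} [CommRing R] (M : Submonoid R)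
    (S : Type*) [CommRing S] [Algebra R S] [IsLocalization M S] [IsPrincipalIdealRing R] :
    IsPrincipalIdealRing S where
  principal J := by
    obtain ⟨g, hg⟩ := IsPrincipalIdealRing.principal (J.under R)
    refine ⟨algebraMap R S g, ?_⟩
    rw [← IsLocalization.map_under M S J, hg]
    simp [Ideal.map_span, Ideal.submodule_span_eq]

instance LaurentPolynomial.instIsPrincipalIdealRing {K : Type*} [Field K] :
    IsPrincipalIdealRing K[T;T⁻¹] :=
  IsLocalization.isPrincipalIdealRing (Submonoid.powers (X : K[X])) _

instance LaurentPolynomial.instIsNoetherianRing {R : Type*} [CommRing R] [IsNoetherianRing R] :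
    IsNoetherianRing R[T;T⁻¹] :=
  IsLocalization.isNoetherianRing (Submonoid.powers (X : R[X])) _ inferInstance

theorem LaurentPolynomial.finite_quotient_map_span_singleton {K : Type*} [Field K] {p : K[X]}
    (hp : p ≠ 0) :
    Module.Finite K (K[T;T⁻¹] ⧸ (Ideal.span {p}).map (algebraMap K[X] K[T;T⁻¹])) := by
  have : Module.Finite K (K[X] ⧸ Ideal.span {p}) := (AdjoinRoot.powerBasis hp).finite
  have : IsArtinianRing (K[X] ⧸ Ideal.span {p}) := .of_finite K _
  let φ := Ideal.quotientMapₐ ((Ideal.span {p}).map (algebraMap K[X] K[T;T⁻¹])) toLaurentAlg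
    Ideal.le_comap_map
  have hφ : ⇑φ = algebraMap _ _ := by
    ext x
    obtain ⟨f, rfl⟩ := Ideal.Quotient.mk_surjective x
    rfl
  refine Module.Finite.of_surjective φ.toLinearMap ?_
  rw [AlgHom.coe_toLinearMap, hφ]
  exact IsArtinianRing.localization_surjective
    (Algebra.algebraMapSubmonoid (K[X] ⧸ Ideal.span {p}) (Submonoid.powers (X : K[X]))) _

theorem LaurentPolynomial.finite_of_isTorsion {K M : Type*} [Field K] [AddCommGroup M]
    [Module K[T;T⁻¹] M] [Module K M] [IsScalarTower K K[T;T⁻¹] M] [Module.Finite K[T;T⁻¹] M]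
    (hM : Module.IsTorsion K[T;T⁻¹] M) : Module.Finite K M := by
  obtain ⟨g, hg_ann, hg⟩ := Submodule.annihilator_top_inter_nonZeroDivisors hM
  obtain ⟨n, p, hp⟩ := g.exists_T_pow
  have hp0 : p ≠ 0 := by
    rintro rfl
    rw [map_zero, eq_comm, (isUnit_T _).mul_left_eq_zero] at hp
    exact nonZeroDivisors.ne_zero hg hp
  set I := (Ideal.span {p}).map (algebraMap K[X] K[T;T⁻¹])
  have hI : Module.IsTorsionBySet K[T;T⁻¹] M I := by
    rw [Module.isTorsionBySet_iff_subset_annihilator, ← Submodule.annihilator_top]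
    refine Ideal.map_le_iff_le_comap.mpr (Ideal.span_le.mpr ?_)
    rw [Set.singleton_subset_iff, SetLike.mem_coe, Ideal.mem_comap, algebraMap_eq_toLaurent, hp]
    exact Ideal.mul_mem_right _ _ hg_ann
  let := hI.module
  have : Module.Finite K (K[T;T⁻¹] ⧸ I) := finite_quotient_map_span_singleton hp0
  have : Module.Finite (K[T;T⁻¹] ⧸ I) M := .of_restrictScalars_finite K[T;T⁻¹] _ _
  exact .trans (K[T;T⁻¹] ⧸ I) M

theorem LinearEquiv.subsingleton_of_conj_eq_add_one {K V : Type*} [Field K] [CharZero K]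
    [AddCommGroup V] [Module K V] [FiniteDimensional K V] (D : V →ₗ[K] V) (e : V ≃ₗ[K] V)
    (h : e.conj D = D + 1) : Subsingleton V := by
  have htrace := LinearMap.trace_conj' D e
  rw [h, map_add, LinearMap.trace_one, add_eq_left, Nat.cast_eq_zero] at htrace
  exact Module.finrank_zero_iff.mp htrace

theorem Submodule.mem_torsion_of_leibniz {R M : Type*} [CommRing R] [AddCommGroup M]
    [Module R M] (θ : R → R) (D : M →+ M) (hD : ∀ (f : R) (m : M), D (f • m) = θ f • m + f • D m)
    {m : M} (hm : m ∈ torsion R M) : D m ∈ torsion R M := by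
  obtain ⟨a, ha⟩ := (mem_torsion_iff m).mp hm
  refine (mem_torsion_iff _).mpr ⟨a * a, ?_⟩
  rw [Submonoid.smul_def] at ha ⊢
  have hDa : (a : R) • D m = -(θ a • m) := by
    rw [eq_neg_iff_add_eq_zero, add_comm, ← hD, ha, map_zero]
  rw [Submonoid.coe_mul, mul_smul, hDa, smul_neg, smul_comm, ha, smul_zero, neg_zero]

theorem LaurentPolynomial.subsingleton_of_leibniz {K M : Type*} [Field K] [CharZero K]
    [AddCommGroup M] [Module K[T;T⁻¹] M] [Module K M] [IsScalarTower K K[T;T⁻¹] M]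
    [FiniteDimensional K M] (θ : K[T;T⁻¹] → K[T;T⁻¹]) (hθ : θ (T 1) = T 1) (D : M →ₗ[K] M)
    (hD : ∀ (f : K[T;T⁻¹]) (m : M), D (f • m) = θ f • m + f • D m) : Subsingleton M := by
  let u : K[T;T⁻¹]ˣ := ⟨T (-1), T 1, by rw [← T_add, neg_add_cancel, T_zero],
    by rw [← T_add, add_neg_cancel, T_zero]⟩
  refine (DistribMulAction.toLinearEquiv K M u).subsingleton_of_conj_eq_add_one D
    (LinearMap.ext fun m => ?_)
  change (T (-1) : K[T;T⁻¹]) • D ((T 1 : K[T;T⁻¹]) • m) = D m + m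
  rw [hD, hθ, smul_add, smul_smul, smul_smul, ← T_add, neg_add_cancel, T_zero, one_smul,
    one_smul, add_comm]

theorem stmt_17_general {C M : Type*} [Field C] [CharZero C]
    [AddCommGroup M] [Module (LaurentPolynomial C) M] [Module.Finite (LaurentPolynomial C) M]
    [Module C M] [IsScalarTower C (LaurentPolynomial C) M]
    (θ : LaurentPolynomial C →ₗ[C] LaurentPolynomial C)
    (hθ : ∀ n : ℤ, θ (LaurentPolynomial.T n) = n • LaurentPolynomial.T n)
    (D : M →ₗ[C] M)
    (hD : ∀ (f : LaurentPolynomial C) (m : M), D (f • m) = θ f • m + f • D m) :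
    Module.Free (LaurentPolynomial C) M := by
  have htorsion : Submodule.torsion C[T;T⁻¹] M = ⊥ := by
    let N := Submodule.torsion C[T;T⁻¹] M
    have : Module.Finite C N := finite_of_isTorsion Submodule.torsion_isTorsion
    let DN : N →ₗ[C] N := D.restrict (p := N.restrictScalars C) (q := N.restrictScalars C)
      fun _ hm => Submodule.mem_torsion_of_leibniz θ D.toAddMonoidHom hD hm
    have : Subsingleton N := subsingleton_of_leibniz θ (by simpa using hθ 1) DN
      fun f m => Subtype.ext (hD f m)
    exact Submodule.eq_bot_of_subsingleton
  have := Submodule.isTorsionFree_iff_torsion_eq_bot.mpr htorsion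
  exact Module.free_of_finite_type_torsion_free'

/-- A finitely generated module over the Laurent polynomial ring `C[x, x⁻¹]` equipped
with a connection relative to the derivation `ϑ = x·d/dx` is free. -/
theorem stmt_17 {C M : Type*} [Field C] [IsAlgClosed C] [CharZero C]
    [AddCommGroup M] [Module (LaurentPolynomial C) M] [Module.Finite (LaurentPolynomial C) M]
    [Module C M] [IsScalarTower C (LaurentPolynomial C) M]
    (θ : LaurentPolynomial C →ₗ[C] LaurentPolynomial C)
    (hθ : ∀ n : ℤ, θ (LaurentPolynomial.T n) = n • LaurentPolynomial.T n)
    (D : M →ₗ[C] M)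
    (hD : ∀ (f : LaurentPolynomial C) (m : M), D (f • m) = θ f • m + f • D m) :
    Module.Free (LaurentPolynomial C) M :=
  stmt_17_general θ hθ D hD
end
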